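/- Let ξ ∈ 𝕌ⁿ with Re(ξ) = 0 and g ∈ ℂ. Then the fundamental Whittaker function has plane-wave asymptotics: for every ε > 0 there exists R > 0 such that for all x ∈ ℝⁿ with x_k − x_{k+1} ≥ R for k = 1,…,n (with the convention x_{n+1} = 0), one has |φ_ξ(x;g) − e^{⟨ξ,x⟩}| < ε. -/

import Mathlib

open scoped BigOperators
open Finset Filter Topology

noncomputable section

namespace TodaBC

variable {n : ℕ}

/-- The bilinear pairing `⟨ξ,x⟩ = ∑_j ξ_j x_j` on `ℂⁿ`. -/
def pc (ξ x : Fin n → ℂ) : ℂ := ∑ j, ξ j * x j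

/-- Complexification of an integer vector. -/
def zc (ν : Fin n → ℤ) : Fin n → ℂ := fun j => (ν j : ℂ)

/-- Complexification of a real vector. -/
def cr (x : Fin n → ℝ) : Fin n → ℂ := fun j => (x j : ℂ)

/-- `ρ = (n, n-1, …, 1)` as a complex vector (0-indexed: `ρ_j = n - j`). -/
def rhoC (n : ℕ) : Fin n → ℂ := fun j => ((n - (j : ℕ) : ℕ) : ℂ)

/-- `ρ = (n, n-1, …, 1)` as a real vector. -/
def rhoR (n : ℕ) : Fin n → ℝ := fun j => ((n - (j : ℕ) : ℕ) : ℝ)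

/-- `⟨ν,ρ⟩` for an integer vector `ν`. -/
def rp (ν : Fin n → ℤ) : ℤ := ∑ j, ν j * ((n : ℤ) - ((j : ℕ) : ℤ))

/-- `ν ≥ 0` : all initial partial sums of `ν` are nonnegative. -/
def dominant (ν : Fin n → ℤ) : Prop := ∀ k : Fin n, 0 ≤ ∑ j ∈ Finset.Iic k, ν j

/-- The domain `𝕌ⁿ = {ξ ∈ ℂⁿ ∣ ⟨ν-2ξ,ν⟩ ≠ 0 for all ν > 0}`. -/
def Uset (n : ℕ) : Set (Fin n → ℂ) :=
  {ξ | ∀ ν : Fin n → ℤ, dominant ν → ν ≠ 0 → pc (zc ν - 2 • ξ) (zc ν) ≠ 0}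

/-- Standard basis vector of `ℤⁿ` with (0-based) index `k`. -/
def eZ (n : ℕ) (k : ℕ) : Fin n → ℤ := fun i => if (i : ℕ) = k then 1 else 0

/-- RHS of the Toda Harish-Chandra recurrence: `∑_{α ∈ S} a_α a_{ν-α}`. -/
def todaRHS (g : ℂ) (a : (Fin n → ℤ) → ℂ) (ν : Fin n → ℤ) : ℂ :=
  (∑ k ∈ Finset.range (n - 1), 2 * a (ν - (eZ n k - eZ n (k + 1))))
    + g * a (ν - eZ n (n - 1)) + (1 / 4) * a (ν - 2 • eZ n (n - 1))

/-- `a` is the family of Harish-Chandra coefficients `ν ↦ a_ν(ξ;g)`. -/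
def IsHC (g : ℂ) (ξ : Fin n → ℂ) (a : (Fin n → ℤ) → ℂ) : Prop :=
  a 0 = 1 ∧ (∀ ν, ¬ dominant ν → a ν = 0) ∧
    ∀ ν, dominant ν → ν ≠ 0 →
      a ν = (pc (zc ν - 2 • ξ) (zc ν))⁻¹ * todaRHS g a ν

/-- Term of the Harish-Chandra series: `a_ν e^{⟨ξ-ν,x⟩}`. -/
def hcTerm (a : (Fin n → ℤ) → ℂ) (ξ x : Fin n → ℂ) (ν : Fin n → ℤ) : ℂ :=
  a ν * Complex.exp (pc (ξ - zc ν) x)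

/-- The Toda + Morse potential `∑_{α ∈ S} a_α e^{-⟨α,x⟩}`. -/
def potential (n : ℕ) (g : ℂ) (x : Fin n → ℂ) : ℂ :=
  (∑ k ∈ Finset.range (n - 1), 2 * Complex.exp (- pc (zc (eZ n k - eZ n (k + 1))) x))
    + g * Complex.exp (- pc (zc (eZ n (n - 1))) x)
    + (1 / 4) * Complex.exp (- pc (zc (2 • eZ n (n - 1))) x)

/-- `∂²f/∂x_j²` evaluated at `x`. -/
def secondPartial (f : (Fin n → ℂ) → ℂ) (j : Fin n) (x : Fin n → ℂ) : ℂ :=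
  iteratedDeriv 2 (fun s => f (Function.update x j s)) (x j)

/-- `ℂⁿ_{reg,+}`. -/
def regPlus (n : ℕ) : Set (Fin n → ℂ) :=
  {ξ | (∀ j, ∀ m : ℤ, 0 < m → 2 * ξ j ≠ (m : ℂ)) ∧
    ∀ j k : Fin n, j < k → ∀ m : ℤ, 0 < m → ξ j + ξ k ≠ (m : ℂ) ∧ ξ j - ξ k ≠ (m : ℂ)}

/-- `ℂⁿ_{reg}`. -/
def regSet (n : ℕ) : Set (Fin n → ℂ) :=
  {ξ | (∀ j, ∀ m : ℤ, 2 * ξ j ≠ (m : ℂ)) ∧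
    ∀ j k : Fin n, j < k → ∀ m : ℤ, ξ j + ξ k ≠ (m : ℂ) ∧ ξ j - ξ k ≠ (m : ℂ)}

/-- `ℂⁿ_{reg,-}`. -/
def regMinus (n : ℕ) : Set (Fin n → ℂ) :=
  {ξ | (∀ j, ∀ m : ℤ, m ≤ 0 → 2 * ξ j ≠ (m : ℂ)) ∧
    ∀ j k : Fin n, j < k → ∀ m : ℤ, m ≤ 0 → ξ j + ξ k ≠ (m : ℂ) ∧ ξ j - ξ k ≠ (m : ℂ)}

/-- The condition `x_k - x_{k+1} ≥ R` for `k = 1,…,n` (with `x_{n+1} = 0`). -/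
def spaced (n : ℕ) (R : ℝ) (x : Fin n → ℝ) : Prop :=
  ∀ k : Fin n, (if h : (k : ℕ) + 1 < n then x ⟨(k : ℕ) + 1, h⟩ else 0) + R ≤ x k

/-- The Toda `c`-function `C(ξ;g)`. -/
def Cfun (g : ℂ) (ξ : Fin n → ℂ) : ℂ :=
  (∏ j, Complex.Gamma (2 * ξ j) / Complex.Gamma (1 / 2 + g + ξ j)) *
    ∏ j, ∏ k ∈ Finset.Ioi j, Complex.Gamma (ξ j + ξ k) * Complex.Gamma (ξ j - ξ k)

/-- Action of the signed permutation `(σ,ε)` on `ℂⁿ`: `(wξ)_j = ε_j ξ_{σ_j}`. -/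
def wAct (σ : Equiv.Perm (Fin n)) (ε : Fin n → Bool) (ξ : Fin n → ℂ) : Fin n → ℂ :=
  fun j => (if ε j then 1 else -1) * ξ (σ j)

/-- The hyperoctahedral Whittaker function `Φ_ξ(x;g) = ∑_{w ∈ W} C(wξ;g) φ_{wξ}(x;g)`,
built from an extension `F` of the fundamental Whittaker function. -/
def PhiOf (F : (Fin n → ℂ) → (Fin n → ℂ) → ℂ → ℂ) (g : ℂ) (ξ x : Fin n → ℂ) : ℂ :=
  ∑ σ : Equiv.Perm (Fin n), ∑ ε : Fin n → Bool,
    Cfun g (wAct σ ε ξ) * F (wAct σ ε ξ) x g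

/-- `F` is the holomorphic extension, to `ℂⁿ_{reg,+} × ℂⁿ × ℂ`, of the fundamental Whittaker
function attached to the coefficient family `a`. -/
def IsPhiExt (n : ℕ) (a : (Fin n → ℂ) → ℂ → (Fin n → ℤ) → ℂ)
    (F : (Fin n → ℂ) → (Fin n → ℂ) → ℂ → ℂ) : Prop :=
  DifferentiableOn ℂ (fun p : (Fin n → ℂ) × (Fin n → ℂ) × ℂ => F p.1 p.2.1 p.2.2)
      ((regPlus n) ×ˢ (Set.univ : Set (Fin n → ℂ)) ×ˢ (Set.univ : Set ℂ)) ∧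
    ∀ ξ ∈ Uset n ∩ regPlus n, ∀ x : Fin n → ℂ, ∀ g : ℂ,
      HasSum (fun ν : Fin n → ℤ => hcTerm (a ξ g) ξ x ν) (F ξ x g)

/-- Sign vector with value `+1` on `P`, `-1` on `M`, `0` elsewhere. -/
def es (P M : Finset (Fin n)) (j : Fin n) : ℂ :=
  if j ∈ P then 1 else if j ∈ M then -1 else 0

/-- The coefficient `V_{εJ}(ξ;g)` where `J = P ∪ M`, `ε = +1` on `P` and `-1` on `M`. -/
def Vco (g : ℂ) (ξ : Fin n → ℂ) (P M : Finset (Fin n)) : ℂ :=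
  (∏ j ∈ P ∪ M, (1 / 2 + g + es P M j * ξ j) / (2 * ξ j * (2 * ξ j + es P M j)))
    * (∏ j ∈ P ∪ M, ∏ k ∈ (P ∪ M)ᶜ, (ξ j ^ 2 - ξ k ^ 2)⁻¹)
    * ∏ j ∈ P ∪ M, ∏ j' ∈ (P ∪ M).filter (fun j' => j < j'),
        (es P M j * ξ j + es P M j' * ξ j')⁻¹ * (1 + es P M j * ξ j + es P M j' * ξ j')⁻¹

/-- The coefficient `U_{K,p}(ξ;g)`. -/
def Uco (g : ℂ) (ξ : Fin n → ℂ) (K : Finset (Fin n)) (p : ℕ) : ℂ :=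
  (-1 : ℂ) ^ (p * (p + 1) / 2) *
    ∑ P : Finset (Fin n), ∑ M : Finset (Fin n),
      if P ⊆ K ∧ M ⊆ K ∧ Disjoint P M ∧ P.card + M.card = p then
        (∏ i ∈ P ∪ M, (1 / 2 + g + es P M i * ξ i) / (2 * ξ i * (2 * ξ i + es P M i)))
          * (∏ i ∈ P ∪ M, ∏ k ∈ K \ (P ∪ M), (ξ i ^ 2 - ξ k ^ 2)⁻¹)
          * ∏ i ∈ P ∪ M, ∏ i' ∈ (P ∪ M).filter (fun i' => i < i'),
              (es P M i * ξ i + es P M i' * ξ i')⁻¹ *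
                (1 + es P M i * ξ i + es P M i' * ξ i')⁻¹
      else 0

/-- LHS of the dual difference equation of order `ℓ`, applied to a function `Φf` of the
spectral variable. -/
def diffLHS (g : ℂ) (ℓ : ℕ) (ξ : Fin n → ℂ) (Φf : (Fin n → ℂ) → ℂ) : ℂ :=
  ∑ P : Finset (Fin n), ∑ M : Finset (Fin n),
    if Disjoint P M ∧ P.card + M.card ≤ ℓ then
      Uco g ξ (P ∪ M)ᶜ (ℓ - (P.card + M.card)) * Vco g ξ P M * Φf (ξ + es P M)
    else 0

/-- The set of linear forms `ξ ↦ 2ξ_j`, `ξ ↦ ξ_j ± ξ_k` (`j < k`). -/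
def LinForms (n : ℕ) : Set ((Fin n → ℂ) → ℂ) :=
  {L | (∃ j, L = fun ξ => 2 * ξ j) ∨
    ∃ j k : Fin n, j < k ∧ ((L = fun ξ => ξ j + ξ k) ∨ L = fun ξ => ξ j - ξ k)}

/-- Exponential damping factor `e^{-c·l·⟨α,ρ⟩}`. -/
def damp (n : ℕ) (c : ℝ) (l : ℕ) (α : Fin n → ℤ) : ℂ :=
  Complex.exp (((-(c * (l : ℝ) * ((rp α : ℤ) : ℝ))) : ℝ) : ℂ)

/-- RHS of the (rescaled) Calogero–Sutherland Harish-Chandra recurrence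
`∑_{α ∈ R₊} ∑_{l ≥ 1} l e^{-c l ⟨α,ρ⟩} a^{cs}_α(k) a_{ν - lα}` (a finite sum since the
terms with `l > ⟨ν,ρ⟩` vanish). -/
def csRHS (k : ℂ × ℂ × ℂ) (c : ℝ) (a : (Fin n → ℤ) → ℂ) (ν : Fin n → ℤ) : ℂ :=
  ∑ l ∈ Finset.Icc 1 (rp ν).toNat, (l : ℂ) *
    ((∑ j : Fin n, damp n c l (eZ n (j : ℕ)) * (k.2.1 * (k.2.1 + 2 * k.2.2 - 1)) *
        a (ν - l • eZ n (j : ℕ)))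
      + (∑ j : Fin n, damp n c l (2 • eZ n (j : ℕ)) * (4 * k.2.2 * (k.2.2 - 1)) *
          a (ν - l • (2 • eZ n (j : ℕ))))
      + ∑ j : Fin n, ∑ j' ∈ Finset.Ioi j,
          (damp n c l (eZ n (j : ℕ) + eZ n (j' : ℕ)) * (2 * k.1 * (k.1 - 1)) *
              a (ν - l • (eZ n (j : ℕ) + eZ n (j' : ℕ)))
            + damp n c l (eZ n (j : ℕ) - eZ n (j' : ℕ)) * (2 * k.1 * (k.1 - 1)) *
                a (ν - l • (eZ n (j : ℕ) - eZ n (j' : ℕ)))))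

/-- `a` is the family of Calogero–Sutherland Harish-Chandra coefficients `ν ↦ a^{cs}_ν(ξ;k)`. -/
def IsHCcs (k : ℂ × ℂ × ℂ) (ξ : Fin n → ℂ) (a : (Fin n → ℤ) → ℂ) : Prop :=
  a 0 = 1 ∧ (∀ ν, ¬ dominant ν → a ν = 0) ∧
    ∀ ν, dominant ν → ν ≠ 0 → pc (zc ν - 2 • ξ) (zc ν) * a ν = csRHS k 0 a ν

/-- `a` is the family of rescaled coefficients `ν ↦ â^{cs}_ν(ξ;k)` (with damping `c` and
initial value `Δval`). -/
def IsHCcsResc (k : ℂ × ℂ × ℂ) (c : ℝ) (Δval : ℂ) (ξ : Fin n → ℂ)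
    (a : (Fin n → ℤ) → ℂ) : Prop :=
  a 0 = Δval ∧ (∀ ν, ¬ dominant ν → a ν = 0) ∧
    ∀ ν, dominant ν → ν ≠ 0 → pc (zc ν - 2 • ξ) (zc ν) * a ν = csRHS k c a ν

/-- The open Weyl chamber `𝔸ⁿ = {x ∈ ℝⁿ ∣ x₁ > x₂ > ⋯ > xₙ > 0}`. -/
def Achamber (n : ℕ) : Set (Fin n → ℝ) :=
  {x | (∀ j k : Fin n, j < k → x k < x j) ∧ ∀ j, 0 < x j}

/-- The coupling parameters `k^{(c)} = (k₀^{(c)}, 2g, k₂^{(c)})` with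
`k₀^{(c)}(k₀^{(c)}-1) = e^c`, `k₂^{(c)}(k₂^{(c)}-1) = e^{2c}/16`, `k₀^{(c)}, k₂^{(c)} > 0`. -/
def kParam (g : ℂ) (c : ℝ) : ℂ × ℂ × ℂ :=
  ((((1 + Real.sqrt (1 + 4 * Real.exp c)) / 2 : ℝ) : ℂ), 2 * g,
    (((1 + Real.sqrt (1 + Real.exp c ^ 2 / 4)) / 2 : ℝ) : ℂ))

/-- The Calogero–Sutherland `c`-function `C^{cs}(ξ;k)`. -/
def Ccs (k : ℂ × ℂ × ℂ) (ξ : Fin n → ℂ) : ℂ :=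
  (∏ j, Complex.Gamma (2 * ξ j) * Complex.Gamma (k.2.1 / 2 + ξ j) /
      (Complex.Gamma (k.2.1 + 2 * ξ j) * Complex.Gamma (k.2.1 / 2 + k.2.2 + ξ j))) *
    ∏ j, ∏ k' ∈ Finset.Ioi j,
      Complex.Gamma (ξ j + ξ k') * Complex.Gamma (ξ j - ξ k') /
        (Complex.Gamma (k.1 + ξ j + ξ k') * Complex.Gamma (k.1 + ξ j - ξ k'))

/-- The normalization constant `γ(k)`. -/
def gammaNorm (n : ℕ) (k : ℂ × ℂ × ℂ) : ℂ :=
  Complex.Gamma k.1 ^ (n * (n - 1)) *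
    (Complex.Gamma k.2.1 * Complex.Gamma (k.2.1 / 2 + k.2.2) /
      (Complex.Gamma (k.2.1 / 2) * Complex.Gamma (1 / 2 + k.2.1 / 2))) ^ n

/-!
For purely imaginary `ξ` one has `Re ⟨ν - 2ξ, ν⟩ = |ν|² ≥ 1` for `ν ≠ 0`, and every `α ∈ S`
has `⟨α, ρ⟩ ≥ 1`, so the recursion gives `|a_ν| ≤ B^⟨ν,ρ⟩` with `B = 2n + |g| + 1`.
Abel summation writes `⟨ν, x⟩ = ∑_k (ν₁ + ⋯ + ν_k)(x_k - x_{k+1})`, which is `≥ R ⟨ν, ρ⟩` when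
`ν ≥ 0` and all gaps of `x` are `≥ R`; hence the term of index `ν` is at most `(B e^{-R})^⟨ν,ρ⟩`.
Since `ν ↦ (ν₁ + ⋯ + ν_k)_k` embeds the dominant cone into `ℕⁿ` and `⟨ν, ρ⟩` is the sum of these
partial sums, `∑_{ν ≥ 0} q^⟨ν,ρ⟩` is dominated by a product of geometric series; by dominated
convergence it tends to its `ν = 0` term `1` as `q → 0`, which bounds the tail of the series.
-/

instance (ν : Fin n → ℤ) : Decidable (dominant ν) :=
  inferInstanceAs (Decidable (∀ k : Fin n, 0 ≤ ∑ j ∈ Iic k, ν j))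

section Abel

variable {R : Type*}

def gap [Sub R] [Zero R] (x : Fin n → R) (k : Fin n) : R :=
  x k - if h : (k : ℕ) + 1 < n then x ⟨(k : ℕ) + 1, h⟩ else 0

lemma sum_Ici_gap [AddCommGroup R] (x : Fin n → R) (j : Fin n) :
    ∑ k ∈ Ici j, gap x k = x j := by
  set y : ℕ → R := fun i => if h : i < n then x ⟨i, h⟩ else 0
  have hgap : ∀ k : Fin n, gap x k = -(y ((k : ℕ) + 1) - y k) := fun k => by
    simp [gap, y, k.isLt]
  calc ∑ k ∈ Ici j, gap x k = ∑ i ∈ Ico (j : ℕ) n, -(y (i + 1) - y i) := by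
        rw [← Fin.map_valEmbedding_Ici, sum_map]
        exact sum_congr rfl fun k _ => hgap k
    _ = x j := by
        rw [sum_neg_distrib, sum_Ico_sub _ j.isLt.le]
        simp [y, j.isLt]

lemma sum_mul_eq_sum_sum_Iic_mul_gap [CommRing R] (ν x : Fin n → R) :
    ∑ j, ν j * x j = ∑ k, (∑ j ∈ Iic k, ν j) * gap x k := by
  simp_rw [sum_mul]
  rw [sum_comm' (t' := univ) (s' := fun j => Ici j) (by simp)]
  simp_rw [← mul_sum, sum_Ici_gap]

end Abel

lemma rp_eq_sum_sum_Iic (ν : Fin n → ℤ) : rp ν = ∑ k, ∑ j ∈ Iic k, ν j := by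
  have hρ : ∀ k : Fin n, gap (fun j : Fin n => (n : ℤ) - (j : ℕ)) k = 1 := fun k => by
    have := k.isLt
    unfold gap
    split_ifs <;> push_cast <;> omega
  rw [rp, sum_mul_eq_sum_sum_Iic_mul_gap]
  simp [hρ]

lemma eq_of_sum_Iic_eq {ν μ : Fin n → ℤ}
    (h : ∀ k, ∑ j ∈ Iic k, ν j = ∑ j ∈ Iic k, μ j) : ν = μ := by
  funext i
  have hsingle : ∀ ν : Fin n → ℤ, ∑ j, ν j * (Pi.single i 1 : Fin n → ℤ) j = ν i := fun ν => by
    simp [Pi.single_apply]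
  rw [← hsingle ν, ← hsingle μ, sum_mul_eq_sum_sum_Iic_mul_gap ν,
    sum_mul_eq_sum_sum_Iic_mul_gap μ]
  simp_rw [h]

lemma dominant.rp_nonneg {ν : Fin n → ℤ} (hν : dominant ν) : 0 ≤ rp ν := by
  rw [rp_eq_sum_sum_Iic]
  exact sum_nonneg fun k _ => hν k

lemma dominant.rp_pos {ν : Fin n → ℤ} (hν : dominant ν) (h0 : ν ≠ 0) : 0 < rp ν := by
  refine hν.rp_nonneg.lt_of_ne fun h => h0 (eq_of_sum_Iic_eq fun k => ?_)
  rw [rp_eq_sum_sum_Iic, eq_comm, sum_eq_zero_iff_of_nonneg fun k _ => hν k] at h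
  simpa using h k (mem_univ k)

lemma dominant.toNat_rp {ν : Fin n → ℤ} (hν : dominant ν) :
    (rp ν).toNat = ∑ k, (∑ j ∈ Iic k, ν j).toNat := by
  zify
  rw [Int.toNat_of_nonneg hν.rp_nonneg, rp_eq_sum_sum_Iic]
  exact sum_congr rfl fun k _ => (Int.toNat_of_nonneg (hν k)).symm

lemma mul_rp_le_of_spaced {R : ℝ} {x : Fin n → ℝ} (hx : spaced n R x) {ν : Fin n → ℤ}
    (hν : dominant ν) : R * rp ν ≤ ∑ j, (ν j : ℝ) * x j := by
  rw [sum_mul_eq_sum_sum_Iic_mul_gap, rp_eq_sum_sum_Iic, Int.cast_sum, mul_sum]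
  refine sum_le_sum fun k _ => ?_
  rw [mul_comm, ← Int.cast_sum]
  refine mul_le_mul_of_nonneg_left ?_ (by exact_mod_cast hν k)
  have := hx k
  unfold gap
  linarith

lemma rp_sub (ν μ : Fin n → ℤ) : rp (ν - μ) = rp ν - rp μ := by
  simp [rp, sub_mul, sum_sub_distrib]

lemma rp_two_nsmul (ν : Fin n → ℤ) : rp (2 • ν) = 2 * rp ν := by
  simp [rp, mul_sum, mul_assoc]

lemma rp_eZ {k : ℕ} (hk : k < n) : rp (eZ n k) = n - k := by
  have hne : ∀ j : Fin n, j ≠ ⟨k, hk⟩ → (j : ℕ) ≠ k := fun j hj h => hj (Fin.ext h)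
  rw [rp, sum_eq_single (⟨k, hk⟩ : Fin n) (fun j _ hj => by simp [eZ, hne j hj]) (by simp)]
  simp [eZ]

lemma norm_todaRHS_le {g : ℂ} {a : (Fin n → ℤ) → ℂ} {ν : Fin n → ℤ} (hν : ν ≠ 0) {M : ℝ}
    (hM0 : 0 ≤ M) (hM : ∀ μ, rp μ < rp ν → ‖a μ‖ ≤ M) :
    ‖todaRHS g a ν‖ ≤ (2 * n + ‖g‖ + 1) * M := by
  obtain ⟨j, -⟩ := Function.ne_iff.1 hν
  have hn : 0 < n := j.pos
  have hsimple : ∀ k ∈ range (n - 1), ‖2 * a (ν - (eZ n k - eZ n (k + 1)))‖ ≤ 2 * M := by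
    intro k hk
    have hk : k + 1 < n := by have := mem_range.1 hk; omega
    rw [norm_mul, Complex.norm_ofNat]
    refine mul_le_mul_of_nonneg_left (hM _ ?_) zero_le_two
    rw [rp_sub, rp_sub, rp_eZ (by omega), rp_eZ hk]
    omega
  have hlast : ‖g * a (ν - eZ n (n - 1))‖ ≤ ‖g‖ * M := by
    rw [norm_mul]
    refine mul_le_mul_of_nonneg_left (hM _ ?_) (norm_nonneg g)
    rw [rp_sub, rp_eZ (by omega)]
    omega
  have hlast2 : ‖(1 / 4 : ℂ) * a (ν - 2 • eZ n (n - 1))‖ ≤ M := by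
    rw [norm_mul]
    refine le_trans (mul_le_of_le_one_left (norm_nonneg _) (by norm_num)) (hM _ ?_)
    rw [rp_sub, rp_two_nsmul, rp_eZ (by omega)]
    omega
  have hsum := (norm_sum_le _ _).trans (sum_le_card_nsmul _ _ _ hsimple)
  rw [card_range, nsmul_eq_mul, Nat.cast_pred hn] at hsum
  calc ‖todaRHS g a ν‖ ≤ (n - 1) * (2 * M) + ‖g‖ * M + M :=
        (norm_add₃_le).trans (add_le_add_three hsum hlast hlast2)
    _ ≤ (2 * n + ‖g‖ + 1) * M := by nlinarith

lemma one_le_norm_pc {ξ : Fin n → ℂ} (hRe : ∀ j, (ξ j).re = 0) {ν : Fin n → ℤ} (hν : ν ≠ 0) :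
    1 ≤ ‖pc (zc ν - 2 • ξ) (zc ν)‖ := by
  have hre : (pc (zc ν - 2 • ξ) (zc ν)).re = ∑ j, ((ν j : ℤ) : ℝ) ^ 2 := by
    simp [pc, zc, Complex.re_sum, Complex.mul_re, hRe, sq]
  obtain ⟨j, hj⟩ := Function.ne_iff.1 hν
  have hj : (1 : ℝ) ≤ (ν j : ℝ) ^ 2 := by
    have : (1 : ℤ) ≤ ν j ^ 2 := by nlinarith [sq_abs (ν j), Int.one_le_abs hj]
    exact_mod_cast this
  calc (1 : ℝ) ≤ ∑ j, ((ν j : ℤ) : ℝ) ^ 2 :=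
        hj.trans (single_le_sum (f := fun i => ((ν i : ℤ) : ℝ) ^ 2) (fun i _ => sq_nonneg _)
          (mem_univ j))
    _ = (pc (zc ν - 2 • ξ) (zc ν)).re := hre.symm
    _ ≤ ‖pc (zc ν - 2 • ξ) (zc ν)‖ := Complex.re_le_norm _

lemma IsHC.norm_le_pow {g : ℂ} {ξ : Fin n → ℂ} {a : (Fin n → ℤ) → ℂ} (hHC : IsHC g ξ a)
    (hRe : ∀ j, (ξ j).re = 0) (ν : Fin n → ℤ) : ‖a ν‖ ≤ (2 * n + ‖g‖ + 1) ^ (rp ν).toNat := by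
  set B : ℝ := 2 * n + ‖g‖ + 1
  have hB : 1 ≤ B := by simp only [B]; linarith [norm_nonneg g, (Nat.cast_nonneg n : (0 : ℝ) ≤ n)]
  have hbase : ∀ μ, ¬(dominant μ ∧ μ ≠ 0) → ‖a μ‖ ≤ 1 := by
    intro μ hμ
    by_cases hd : dominant μ
    · simp [not_not.1 (not_and.1 hμ hd), hHC.1]
    · simp [hHC.2.1 μ hd]
  suffices ∀ m : ℕ, ∀ μ, (rp μ).toNat ≤ m → ‖a μ‖ ≤ B ^ m from this _ ν le_rfl
  intro m
  induction m with
  | zero =>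
    intro μ hμ
    refine (hbase μ fun ⟨hd, h0⟩ => ?_).trans_eq (pow_zero B).symm
    have := hd.rp_pos h0
    omega
  | succ m ih =>
    intro μ hμ
    by_cases hμ0 : dominant μ ∧ μ ≠ 0
    · obtain ⟨hd, h0⟩ := hμ0
      have hRHS := norm_todaRHS_le (g := g) h0 (by positivity) fun μ' hμ' => ih μ' (by omega)
      rw [hHC.2.2 μ hd h0, norm_mul, pow_succ']
      have hinv : ‖(pc (zc μ - 2 • ξ) (zc μ))⁻¹‖ ≤ 1 := by
        rw [norm_inv]
        exact inv_le_one_of_one_le₀ (one_le_norm_pc hRe h0)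
      exact (mul_le_mul hinv hRHS (norm_nonneg _) zero_le_one).trans_eq (one_mul _)
    · exact (hbase μ hμ0).trans (one_le_pow₀ hB)

def dominantWeight (q : ℝ) (ν : Fin n → ℤ) : ℝ := if dominant ν then q ^ (rp ν).toNat else 0

lemma dominantWeight_zero_left (ν : Fin n → ℤ) :
    dominantWeight 0 ν = if ν = 0 then 1 else 0 := by
  by_cases h0 : ν = 0
  · simp [dominantWeight, h0, rp, dominant]
  · by_cases hd : dominant ν
    · have := hd.rp_pos h0
      simp [dominantWeight, hd, h0, show (rp ν).toNat ≠ 0 by omega]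
    · simp [dominantWeight, hd, h0]

lemma dominantWeight_zero_right (q : ℝ) : dominantWeight q (0 : Fin n → ℤ) = 1 := by
  simp [dominantWeight, rp, dominant]

lemma sum_prod_le_prod_tsum {ι α : Type*} [Fintype ι] {f : α → ℝ}
    (hf0 : ∀ a, 0 ≤ f a) (hf : Summable f) (u : Finset (ι → α)) :
    ∑ s ∈ u, ∏ i, f (s i) ≤ ∏ _i : ι, ∑' a, f a := by
  classical
  calc ∑ s ∈ u, ∏ i, f (s i) ≤ ∑ s ∈ Fintype.piFinset (fun i => u.image (· i)), ∏ i, f (s i) :=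
        sum_le_sum_of_subset_of_nonneg
          (fun s hs => Fintype.mem_piFinset.2 fun i => mem_image_of_mem _ hs)
          fun _ _ _ => prod_nonneg fun i _ => hf0 _
    _ = ∏ i, ∑ a ∈ u.image (· i), f a := (prod_univ_sum _ _).symm
    _ ≤ ∏ i, ∑' a, f a :=
        Finset.prod_le_prod (fun i _ => sum_nonneg fun a _ => hf0 a)
          fun i _ => hf.sum_le_tsum _ fun a _ => hf0 a

lemma summable_dominantWeight {q : ℝ} (hq0 : 0 ≤ q) (hq1 : q < 1) :
    Summable (dominantWeight (n := n) q) := by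
  have hw0 : ∀ ν, 0 ≤ dominantWeight (n := n) q ν := fun ν => by
    unfold dominantWeight; split_ifs <;> positivity
  refine summable_of_sum_le (c := ∏ _k : Fin n, ∑' i : ℕ, q ^ i) hw0 fun u => ?_
  set T : (Fin n → ℤ) → Fin n → ℕ := fun ν k => (∑ j ∈ Iic k, ν j).toNat
  have hT : Set.InjOn T {ν | dominant ν} := fun ν hν μ hμ h =>
    eq_of_sum_Iic_eq fun k => by
      have := congrFun h k
      simp only [T] at this
      rw [← Int.toNat_of_nonneg (hν k), ← Int.toNat_of_nonneg (hμ k), this]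
  calc ∑ ν ∈ u, dominantWeight q ν = ∑ ν ∈ u with dominant ν, ∏ k, q ^ T ν k := by
        rw [sum_filter]
        refine sum_congr rfl fun ν _ => ?_
        unfold dominantWeight
        split_ifs with hd
        · rw [prod_pow_eq_pow_sum, hd.toNat_rp]
        · rfl
    _ = ∑ s ∈ {ν ∈ u | dominant ν}.image T, ∏ k, q ^ s k :=
        (sum_image (s := {ν ∈ u | dominant ν}) (f := fun s => ∏ k, q ^ s k)
          (hT.mono fun ν hν => (mem_filter.1 hν).2)).symm
    _ ≤ ∏ _k : Fin n, ∑' i : ℕ, q ^ i :=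
        sum_prod_le_prod_tsum (fun i => pow_nonneg hq0 i) (summable_geometric_of_lt_one hq0 hq1) _

lemma tendsto_tsum_dominantWeight :
    Tendsto (fun q => ∑' ν : Fin n → ℤ, dominantWeight q ν) (𝓝 0) (𝓝 1) := by
  have h0 : ∑' ν : Fin n → ℤ, dominantWeight 0 ν = 1 := by
    simp [dominantWeight_zero_left]
  rw [← h0]
  refine tendsto_tsum_of_dominated_convergence (bound := dominantWeight (1 / 2))
    (summable_dominantWeight (by norm_num) (by norm_num)) (fun ν => ?_) ?_
  · unfold dominantWeight
    split_ifs
    · exact ((continuous_pow _).tendsto 0)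
    · exact tendsto_const_nhds
  · filter_upwards [Ioo_mem_nhds (show (-(1 / 2) : ℝ) < 0 by norm_num)
      (show (0 : ℝ) < 1 / 2 by norm_num)] with q hq ν
    unfold dominantWeight
    split_ifs
    · rw [norm_pow, Real.norm_eq_abs]
      exact pow_le_pow_left₀ (abs_nonneg q) (abs_le.2 ⟨hq.1.le, hq.2.le⟩) _
    · simp

lemma norm_tsum_sub_le_tsum_sub {β E : Type*} [NormedAddCommGroup E] [CompleteSpace E]
    {f : β → E} {w : β → ℝ} (hw : Summable w) (hfw : ∀ i, ‖f i‖ ≤ w i) (b : β) :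
    ‖∑' i, f i - f b‖ ≤ ∑' i, w i - w b := by
  classical
  have hf : Summable f := hw.of_norm_bounded hfw
  calc ‖∑' i, f i - f b‖ = ‖∑' i, Function.update f b 0 i‖ := by
        rw [(hf.hasSum.update b 0).tsum_eq, zero_sub, neg_add_eq_sub]
    _ ≤ 0 - w b + ∑' i, w i := by
        refine tsum_of_norm_bounded (hw.hasSum.update b 0) fun i => ?_
        rcases eq_or_ne i b with rfl | h
        · simp
        · simpa [Function.update_of_ne h] using hfw i
    _ = ∑' i, w i - w b := by ring

lemma IsHC.hcTerm_zero {g : ℂ} {ξ : Fin n → ℂ} {a : (Fin n → ℤ) → ℂ} (hHC : IsHC g ξ a)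
    (x : Fin n → ℂ) : hcTerm a ξ x 0 = Complex.exp (pc ξ x) := by
  have hzc : zc (0 : Fin n → ℤ) = 0 := funext fun j => by simp [zc]
  simp [hcTerm, hHC.1, hzc]

lemma norm_hcTerm {a : (Fin n → ℤ) → ℂ} {ξ : Fin n → ℂ} (hRe : ∀ j, (ξ j).re = 0)
    (x : Fin n → ℝ) (ν : Fin n → ℤ) :
    ‖hcTerm a ξ (cr x) ν‖ = ‖a ν‖ * Real.exp (-∑ j, (ν j : ℝ) * x j) := by
  simp [hcTerm, Complex.norm_exp, pc, zc, cr, Complex.re_sum, Complex.mul_re, hRe]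

lemma IsHC.norm_hcTerm_le {g : ℂ} {ξ : Fin n → ℂ} {a : (Fin n → ℤ) → ℂ} (hHC : IsHC g ξ a)
    (hRe : ∀ j, (ξ j).re = 0) {R : ℝ} {x : Fin n → ℝ} (hx : spaced n R x) (ν : Fin n → ℤ) :
    ‖hcTerm a ξ (cr x) ν‖ ≤ dominantWeight ((2 * n + ‖g‖ + 1) * Real.exp (-R)) ν := by
  rw [norm_hcTerm hRe, dominantWeight]
  split_ifs with hd
  · have hm : ((rp ν).toNat : ℝ) = rp ν := by exact_mod_cast Int.toNat_of_nonneg hd.rp_nonneg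
    rw [mul_pow, ← Real.exp_nat_mul, hm]
    gcongr
    · exact hHC.norm_le_pow hRe ν
    · linarith [mul_rp_le_of_spaced hx hd]
  · simp [hHC.2.1 ν hd]

theorem statement2_general (n : ℕ)
    (a : (Fin n → ℂ) → ℂ → (Fin n → ℤ) → ℂ)
    (ha : ∀ ξ ∈ Uset n, ∀ g : ℂ, IsHC g ξ (a ξ g))
    (ξ : Fin n → ℂ) (hξ : ξ ∈ Uset n) (hRe : ∀ j, (ξ j).re = 0) (g : ℂ) :
    ∀ ε : ℝ, 0 < ε → ∃ R : ℝ, 0 < R ∧ ∀ x : Fin n → ℝ, spaced n R x →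
      ‖(∑' ν : Fin n → ℤ, hcTerm (a ξ g) ξ (cr x) ν) - Complex.exp (pc ξ (cr x))‖ < ε := by
  intro ε hε
  have hHC := ha ξ hξ g
  set q : ℝ → ℝ := fun R => (2 * n + ‖g‖ + 1) * Real.exp (-R)
  have hq : Tendsto q atTop (𝓝 0) := by
    simpa using Real.tendsto_exp_neg_atTop_nhds_zero.const_mul (2 * n + ‖g‖ + 1)
  have htail : Tendsto (fun R => ∑' ν : Fin n → ℤ, dominantWeight (q R) ν - 1) atTop (𝓝 0) := by
    simpa using (tendsto_tsum_dominantWeight.comp hq).sub_const 1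
  obtain ⟨R, hRε, hR1, hR0⟩ := ((htail.eventually (gt_mem_nhds hε)).and
    ((hq.eventually_lt_const one_pos).and (eventually_gt_atTop 0))).exists
  refine ⟨R, hR0, fun x hx => ?_⟩
  calc ‖∑' ν, hcTerm (a ξ g) ξ (cr x) ν - Complex.exp (pc ξ (cr x))‖
      = ‖∑' ν, hcTerm (a ξ g) ξ (cr x) ν - hcTerm (a ξ g) ξ (cr x) 0‖ := by
        rw [hHC.hcTerm_zero]
    _ ≤ ∑' ν, dominantWeight (q R) ν - dominantWeight (q R) 0 :=
        norm_tsum_sub_le_tsum_sub (summable_dominantWeight (by positivity) hR1)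
          (hHC.norm_hcTerm_le hRe hx) 0
    _ < ε := by rwa [dominantWeight_zero_right]

/-- Plane-wave asymptotics of the fundamental Whittaker function for purely imaginary
spectral parameter. -/
theorem statement2 (n : ℕ) (hn : 1 ≤ n)
    (a : (Fin n → ℂ) → ℂ → (Fin n → ℤ) → ℂ)
    (ha : ∀ ξ ∈ Uset n, ∀ g : ℂ, IsHC g ξ (a ξ g))
    (ξ : Fin n → ℂ) (hξ : ξ ∈ Uset n) (hRe : ∀ j, (ξ j).re = 0) (g : ℂ) :
    ∀ ε : ℝ, 0 < ε → ∃ R : ℝ, 0 < R ∧ ∀ x : Fin n → ℝ, spaced n R x →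
      ‖(∑' ν : Fin n → ℤ, hcTerm (a ξ g) ξ (cr x) ν) - Complex.exp (pc ξ (cr x))‖ < ε :=
  statement2_general n a ha ξ hξ hRe g

end TodaBC
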